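/- arXiv:1604.04936 — 3 statements merged into one kernel-verified Lean document; each statement's English description precedes it below -/
import Mathlib

section
/- Let β ∈ [0,1) (so λ = 1−β > 0), let t > 0, and let n : [0,t] → ℝ be continuous and strictly positive. For k ≥ 1 set c_k = ∫_0^t n(t−τ)·P(Z_τ = k) dτ. Then limsup_{k→∞} c_k^{1/k} = S_t^{−1}. Equivalently, P(Y_t = k) = S_t^{−k}·Θ_t(k) where Θ_t(k) is subexponential in k, i.e. limsup_{k→∞} Θ_t(k)^{1/k} = 1; so the clone size distribution has an exponential cut-off at scale S_t at any finite time. -/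
open Filter Real intervalIntegral

/-- `S u = (1 - β e^{-λu})/(1 - e^{-λu})` with `λ = 1 - β`. -/
noncomputable def birthDeathS (β u : ℝ) : ℝ :=
  (1 - β * Real.exp (-(1 - β) * u)) / (1 - Real.exp (-(1 - β) * u))

/-- `P(Z_u = k) = (1 - β/S_u)(S_u - 1) S_u^{-k}` for `k ≥ 1`. -/
noncomputable def birthDeathPMF (β u : ℝ) (k : ℕ) : ℝ :=
  (1 - β / birthDeathS β u) * (birthDeathS β u - 1) * ((birthDeathS β u)⁻¹) ^ k

open Topology MeasureTheory

noncomputable def rfun (β τ : ℝ) : ℝ :=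
  (1 - Real.exp (-(1 - β) * τ)) / (1 - β * Real.exp (-(1 - β) * τ))

lemma xfacts (β τ : ℝ) (hβ0 : 0 ≤ β) (hβ1 : β < 1) (hτ : 0 ≤ τ) :
    0 < Real.exp (-(1 - β) * τ) ∧ Real.exp (-(1 - β) * τ) ≤ 1 ∧
      β * Real.exp (-(1 - β) * τ) < 1 := by
  have h1 : Real.exp (-(1 - β) * τ) ≤ 1 := by
    rw [Real.exp_le_one_iff]; nlinarith
  refine ⟨Real.exp_pos _, h1, ?_⟩
  nlinarith [Real.exp_pos (-(1 - β) * τ)]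

lemma xlt1 (β τ : ℝ) (hβ1 : β < 1) (hτ : 0 < τ) : Real.exp (-(1 - β) * τ) < 1 := by
  rw [Real.exp_lt_one_iff]; nlinarith

lemma rfun_nonneg (β τ : ℝ) (hβ0 : 0 ≤ β) (hβ1 : β < 1) (hτ : 0 ≤ τ) : 0 ≤ rfun β τ := by
  obtain ⟨h0, h1, h2⟩ := xfacts β τ hβ0 hβ1 hτ
  exact div_nonneg (by linarith) (by linarith)

lemma rfun_pos (β τ : ℝ) (hβ0 : 0 ≤ β) (hβ1 : β < 1) (hτ : 0 < τ) : 0 < rfun β τ := by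
  obtain ⟨h0, h1, h2⟩ := xfacts β τ hβ0 hβ1 hτ.le
  have := xlt1 β τ hβ1 hτ
  exact div_pos (by linarith) (by linarith)

lemma rfun_mono (β s u : ℝ) (hβ0 : 0 ≤ β) (hβ1 : β < 1) (h0 : 0 ≤ s) (hsu : s ≤ u) :
    rfun β s ≤ rfun β u := by
  obtain ⟨ha0, ha1, ha2⟩ := xfacts β s hβ0 hβ1 h0
  obtain ⟨hb0, hb1, hb2⟩ := xfacts β u hβ0 hβ1 (h0.trans hsu)
  have hba : Real.exp (-(1 - β) * u) ≤ Real.exp (-(1 - β) * s) := by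
    apply Real.exp_le_exp.2; nlinarith
  rw [rfun, rfun, div_le_div_iff₀ (by linarith) (by linarith)]
  nlinarith

lemma rfun_continuous (β : ℝ) (hβ0 : 0 ≤ β) (hβ1 : β < 1) :
    ContinuousOn (rfun β) (Set.Ici 0) := by
  apply ContinuousOn.div
  · fun_prop
  · fun_prop
  · intro τ hτ
    obtain ⟨h0, h1, h2⟩ := xfacts β τ hβ0 hβ1 hτ
    intro h; rw [sub_eq_zero] at h; linarith

lemma invS_eq (β τ : ℝ) : (birthDeathS β τ)⁻¹ = rfun β τ := by
  rw [birthDeathS, rfun, inv_div]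

lemma pmf_eq (β τ : ℝ) (hβ0 : 0 ≤ β) (hβ1 : β < 1) (hτ : 0 < τ) (k : ℕ) (hk : 1 ≤ k) :
    birthDeathPMF β τ k =
      (1 - β) ^ 2 * Real.exp (-(1 - β) * τ) / (1 - β * Real.exp (-(1 - β) * τ)) ^ 2 *
        (rfun β τ) ^ (k - 1) := by
  obtain ⟨j, rfl⟩ : ∃ j, k = j + 1 := ⟨k - 1, (Nat.succ_pred_eq_of_pos hk).symm⟩
  set x := Real.exp (-(1 - β) * τ) with hxdef
  have hx0 : 0 < x := Real.exp_pos _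
  have hx1 : x < 1 := by rw [hxdef, Real.exp_lt_one_iff]; nlinarith
  have hbx : β * x < 1 := by nlinarith
  have h1 : (1 : ℝ) - x ≠ 0 := by linarith
  have h2 : (1 : ℝ) - β * x ≠ 0 := by linarith
  have key : (1 - β / birthDeathS β τ) * (birthDeathS β τ - 1) * rfun β τ
      = (1 - β) ^ 2 * x / (1 - β * x) ^ 2 := by
    rw [birthDeathS, rfun, ← hxdef]
    field_simp
    ring
  rw [birthDeathPMF, invS_eq, Nat.add_sub_cancel, pow_succ]
  calc (1 - β / birthDeathS β τ) * (birthDeathS β τ - 1) * (rfun β τ ^ j * rfun β τ)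
      = (1 - β / birthDeathS β τ) * (birthDeathS β τ - 1) * rfun β τ * rfun β τ ^ j := by ring
    _ = (1 - β) ^ 2 * x / (1 - β * x) ^ 2 * rfun β τ ^ j := by rw [key]

lemma aux_tendsto (C A : ℝ) (hC : 0 < C) (hA : 0 < A) :
    Tendsto (fun k : ℕ => (C * A ^ k) ^ ((1 : ℝ) / (k : ℝ))) atTop (𝓝 A) := by
  have h0 : Tendsto (fun k : ℕ => Real.log C * (1 / (k : ℝ))) atTop (𝓝 0) := by
    simpa using (tendsto_one_div_atTop_nhds_zero_nat).const_mul (Real.log C)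
  have h1 : Tendsto (fun k : ℕ => Real.exp (Real.log C * (1 / (k : ℝ))) * A) atTop (𝓝 A) := by
    have h2 := (Real.continuous_exp.tendsto 0).comp h0
    simpa using h2.mul_const A
  refine h1.congr' ?_
  filter_upwards [eventually_ge_atTop 1] with k hk
  have hk0 : (k : ℝ) ≠ 0 := Nat.cast_ne_zero.2 (by omega)
  rw [Real.mul_rpow hC.le (pow_nonneg hA.le k), ← Real.rpow_natCast A k,
    ← Real.rpow_mul hA.le, mul_one_div (k:ℝ) (k:ℝ), div_self hk0, Real.rpow_one,
    Real.rpow_def_of_pos hC]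

set_option maxHeartbeats 1000000 in
/-- Finite-time exponential cut-off of the clone size distribution: with
`c k = ∫_0^t n(t-τ) P(Z_τ = k) dτ`, one has `limsup_{k→∞} c_k^{1/k} = S_t⁻¹`. -/
theorem clone_size_cutoff
    (β : ℝ) (hβ : β ∈ Set.Ico (0 : ℝ) 1) (t : ℝ) (ht : 0 < t)
    (n : ℝ → ℝ) (hcont : ContinuousOn n (Set.Icc 0 t))
    (hpos : ∀ τ ∈ Set.Icc (0 : ℝ) t, 0 < n τ)
    (c : ℕ → ℝ)
    (hc : ∀ k : ℕ, 1 ≤ k →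
      c k = ∫ τ in (0:ℝ)..t, n (t - τ) * birthDeathPMF β τ k) :
    Filter.limsup (fun k : ℕ => (c k) ^ ((1 : ℝ) / (k : ℝ))) atTop
      = (birthDeathS β t)⁻¹ := by
  obtain ⟨hβ0, hβ1⟩ := hβ
  have hAr : (birthDeathS β t)⁻¹ = rfun β t := invS_eq β t
  set A := rfun β t with hAdef
  have hApos : 0 < A := rfun_pos β t hβ0 hβ1 ht
  -- max and min of n on [0, t]
  obtain ⟨zM, hzM, hM'⟩ := isCompact_Icc.exists_isMaxOn (Set.nonempty_Icc.2 ht.le) hcont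
  obtain ⟨zm, hzm, hm'⟩ := isCompact_Icc.exists_isMinOn (Set.nonempty_Icc.2 ht.le) hcont
  have hM : ∀ y ∈ Set.Icc (0:ℝ) t, n y ≤ n zM := isMaxOn_iff.mp hM'
  have hm : ∀ y ∈ Set.Icc (0:ℝ) t, n zm ≤ n y := isMinOn_iff.mp hm'
  set M := n zM with hMdef
  set m := n zm with hmdef
  have hMpos : 0 < M := hpos zM hzM
  have hmpos : 0 < m := hpos zm hzm
  -- the nice integrand
  set F : ℕ → ℝ → ℝ := fun k τ =>
    n (t - τ) * ((1 - β) ^ 2 * Real.exp (-(1 - β) * τ) /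
      (1 - β * Real.exp (-(1 - β) * τ)) ^ 2 * (rfun β τ) ^ (k - 1)) with hFdef
  have hFcont : ∀ k, ContinuousOn (F k) (Set.Icc 0 t) := by
    intro k
    apply ContinuousOn.mul
    · exact hcont.comp (by fun_prop) (fun τ hτ => ⟨by simp at hτ ⊢; linarith [hτ.2],
        by simp at hτ ⊢; linarith [hτ.1]⟩)
    · apply ContinuousOn.mul
      · apply ContinuousOn.div
        · fun_prop
        · fun_prop
        · intro τ hτ
          obtain ⟨h0, h1, h2⟩ := xfacts β τ hβ0 hβ1 hτ.1
          exact ne_of_gt (by nlinarith)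
      · exact ((rfun_continuous β hβ0 hβ1).mono (fun τ hτ => hτ.1)).pow _
  have hFnonneg : ∀ k, ∀ τ ∈ Set.Icc (0:ℝ) t, 0 ≤ F k τ := by
    intro k τ hτ
    obtain ⟨h0, h1, h2⟩ := xfacts β τ hβ0 hβ1 hτ.1
    have hn : 0 < n (t - τ) := hpos _ ⟨by linarith [hτ.2], by linarith [hτ.1]⟩
    have hr := rfun_nonneg β τ hβ0 hβ1 hτ.1
    positivity
  -- c k equals the integral of F k
  have hceq : ∀ k, 1 ≤ k → c k = ∫ τ in (0:ℝ)..t, F k τ := by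
    intro k hk
    rw [hc k hk, intervalIntegral.integral_of_le ht.le,
      intervalIntegral.integral_of_le ht.le]
    apply MeasureTheory.setIntegral_congr_fun measurableSet_Ioc
    intro τ hτ
    simp only [hFdef]
    rw [pmf_eq β τ hβ0 hβ1 hτ.1 k hk]
  -- integrability
  have hFint : ∀ k, ∀ a b, a ∈ Set.Icc (0:ℝ) t → b ∈ Set.Icc (0:ℝ) t →
      IntervalIntegrable (F k) MeasureTheory.volume a b := by
    intro k a b ha hb
    apply ContinuousOn.intervalIntegrable
    apply (hFcont k).mono
    rw [← Set.uIcc_of_le ht.le]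
    exact Set.uIcc_subset_uIcc (by rwa [Set.uIcc_of_le ht.le]) (by rwa [Set.uIcc_of_le ht.le])
  have h0Icc : (0:ℝ) ∈ Set.Icc (0:ℝ) t := Set.left_mem_Icc.2 ht.le
  have htIcc : t ∈ Set.Icc (0:ℝ) t := Set.right_mem_Icc.2 ht.le
  -- nonnegativity of c
  have hcnn : ∀ k, 1 ≤ k → 0 ≤ c k := by
    intro k hk
    rw [hceq k hk]
    exact intervalIntegral.integral_nonneg ht.le (hFnonneg k)
  -- upper bound
  set C1 := M * t / A with hC1def
  have hC1pos : 0 < C1 := by positivity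
  have hub : ∀ k, 1 ≤ k → c k ≤ C1 * A ^ k := by
    intro k hk
    have hpt : ∀ τ ∈ Set.Icc (0:ℝ) t, F k τ ≤ M * A ^ (k - 1) := by
      intro τ hτ
      obtain ⟨h0, h1, h2⟩ := xfacts β τ hβ0 hβ1 hτ.1
      have hτIcc : t - τ ∈ Set.Icc (0:ℝ) t := ⟨by linarith [hτ.2], by linarith [hτ.1]⟩
      have hn : n (t - τ) ≤ M := hM _ hτIcc
      have hc2 : (1 - β) ^ 2 * Real.exp (-(1 - β) * τ) /
          (1 - β * Real.exp (-(1 - β) * τ)) ^ 2 ≤ 1 := by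
        rw [div_le_one (by nlinarith)]
        have ha : 1 - β ≤ 1 - β * Real.exp (-(1 - β) * τ) := by nlinarith
        have hb : (1 - β) ^ 2 ≤ (1 - β * Real.exp (-(1 - β) * τ)) ^ 2 := by nlinarith
        have hcx : (1 - β) ^ 2 * Real.exp (-(1 - β) * τ) ≤ (1 - β) ^ 2 := by
          nlinarith [sq_nonneg (1 - β)]
        linarith
      have hr : rfun β τ ^ (k - 1) ≤ A ^ (k - 1) :=
        pow_le_pow_left₀ (rfun_nonneg β τ hβ0 hβ1 hτ.1) (rfun_mono β τ t hβ0 hβ1 hτ.1 hτ.2) _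
      have hc2nn : 0 ≤ (1 - β) ^ 2 * Real.exp (-(1 - β) * τ) /
          (1 - β * Real.exp (-(1 - β) * τ)) ^ 2 := by positivity
      have hrnn : 0 ≤ rfun β τ ^ (k - 1) := pow_nonneg (rfun_nonneg β τ hβ0 hβ1 hτ.1) _
      calc F k τ ≤ M * ((1 - β) ^ 2 * Real.exp (-(1 - β) * τ) /
              (1 - β * Real.exp (-(1 - β) * τ)) ^ 2 * rfun β τ ^ (k - 1)) :=
            mul_le_mul_of_nonneg_right hn (mul_nonneg hc2nn hrnn)
        _ ≤ M * (1 * A ^ (k - 1)) := by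
            apply mul_le_mul_of_nonneg_left
              (mul_le_mul hc2 hr hrnn zero_le_one) hMpos.le
        _ = M * A ^ (k - 1) := by ring
    have h2 := intervalIntegral.integral_mono_on ht.le
      (hFint k 0 t h0Icc htIcc) intervalIntegrable_const hpt
    rw [intervalIntegral.integral_const, smul_eq_mul] at h2
    have hAk : A ^ k = A ^ (k - 1) * A := by
      conv_lhs => rw [← Nat.sub_add_cancel hk]
      rw [pow_succ]
    have heq : C1 * A ^ k = M * A ^ (k - 1) * t := by
      rw [hC1def, hAk]; field_simp
    rw [hceq k hk, heq]
    nlinarith [h2]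
  -- lower bound
  have hlb : ∀ s, s ∈ Set.Ioo 0 t → ∃ C, 0 < C ∧ ∀ k, 1 ≤ k → C * rfun β s ^ k ≤ c k := by
    intro s hs
    have hrs : 0 < rfun β s := rfun_pos β s hβ0 hβ1 hs.1
    have hts : 0 < t - s := by linarith [hs.2]
    set m' := m * ((1 - β) ^ 2 * Real.exp (-(1 - β) * t)) with hm'def
    have hm'pos : 0 < m' :=
      mul_pos hmpos (mul_pos (by nlinarith : (0:ℝ) < (1 - β) ^ 2) (Real.exp_pos _))
    refine ⟨m' * (t - s) / rfun β s, div_pos (mul_pos hm'pos hts) hrs, ?_⟩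
    intro k hk
    have hsIcc : s ∈ Set.Icc (0:ℝ) t := ⟨hs.1.le, hs.2.le⟩
    have hsplit : (∫ τ in (0:ℝ)..s, F k τ) + (∫ τ in s..t, F k τ) = ∫ τ in (0:ℝ)..t, F k τ :=
      intervalIntegral.integral_add_adjacent_intervals
        (hFint k 0 s h0Icc hsIcc) (hFint k s t hsIcc htIcc)
    have hI1 : 0 ≤ ∫ τ in (0:ℝ)..s, F k τ :=
      intervalIntegral.integral_nonneg hs.1.le
        (fun τ hτ => hFnonneg k τ ⟨hτ.1, hτ.2.trans hs.2.le⟩)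
    have hpt : ∀ τ ∈ Set.Icc s t, m' * rfun β s ^ (k - 1) ≤ F k τ := by
      intro τ hτ
      have hτ0 : 0 ≤ τ := hs.1.le.trans hτ.1
      obtain ⟨h0, h1x, h2⟩ := xfacts β τ hβ0 hβ1 hτ0
      have hτIcc : t - τ ∈ Set.Icc (0:ℝ) t := ⟨by linarith [hτ.2], by linarith [hτ0]⟩
      have hn : m ≤ n (t - τ) := hm _ hτIcc
      have hx : Real.exp (-(1 - β) * t) ≤ Real.exp (-(1 - β) * τ) :=
        Real.exp_le_exp.2 (by nlinarith [hτ.2])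
      have hdpos : 0 < (1 - β * Real.exp (-(1 - β) * τ)) ^ 2 := by nlinarith
      have hy0 : 0 ≤ β * Real.exp (-(1 - β) * τ) := mul_nonneg hβ0 h0.le
      have hd1 : (1 - β * Real.exp (-(1 - β) * τ)) ^ 2 ≤ 1 :=
        pow_le_one₀ (by linarith) (by linarith)
      have hc2 : (1 - β) ^ 2 * Real.exp (-(1 - β) * t) ≤
          (1 - β) ^ 2 * Real.exp (-(1 - β) * τ) /
            (1 - β * Real.exp (-(1 - β) * τ)) ^ 2 := by
        rw [le_div_iff₀ hdpos]
        have e1 : (1 - β) ^ 2 * Real.exp (-(1 - β) * t) * (1 - β * Real.exp (-(1 - β) * τ)) ^ 2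
            ≤ (1 - β) ^ 2 * Real.exp (-(1 - β) * t) * 1 :=
          mul_le_mul_of_nonneg_left hd1 (by positivity)
        have e2 : (1 - β) ^ 2 * Real.exp (-(1 - β) * t) ≤ (1 - β) ^ 2 * Real.exp (-(1 - β) * τ) :=
          mul_le_mul_of_nonneg_left hx (sq_nonneg _)
        linarith
      have hr : rfun β s ^ (k - 1) ≤ rfun β τ ^ (k - 1) :=
        pow_le_pow_left₀ hrs.le (rfun_mono β s τ hβ0 hβ1 hs.1.le hτ.1) _
      calc m' * rfun β s ^ (k - 1)
          = m * ((1 - β) ^ 2 * Real.exp (-(1 - β) * t) * rfun β s ^ (k - 1)) := by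
            rw [hm'def]; ring
        _ ≤ n (t - τ) * ((1 - β) ^ 2 * Real.exp (-(1 - β) * τ) /
              (1 - β * Real.exp (-(1 - β) * τ)) ^ 2 * rfun β τ ^ (k - 1)) := by
            apply mul_le_mul hn
              (mul_le_mul hc2 hr (pow_nonneg hrs.le _) (by positivity))
              (by positivity) (hpos _ hτIcc).le
    have h2 := intervalIntegral.integral_mono_on hs.2.le
      intervalIntegrable_const (hFint k s t hsIcc htIcc) hpt
    rw [intervalIntegral.integral_const, smul_eq_mul] at h2
    have hAk : rfun β s ^ k = rfun β s ^ (k - 1) * rfun β s := by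
      conv_lhs => rw [← Nat.sub_add_cancel hk]
      rw [pow_succ]
    have heq : m' * (t - s) / rfun β s * rfun β s ^ k = m' * rfun β s ^ (k - 1) * (t - s) := by
      rw [hAk]; field_simp
    rw [hceq k hk, ← hsplit, heq]
    nlinarith [h2]
  -- the limit
  have htend : Tendsto (fun k : ℕ => c k ^ ((1 : ℝ) / (k : ℝ))) atTop (𝓝 A) := by
    rw [tendsto_order]
    constructor
    · intro b hb
      have hcontr : ContinuousAt (rfun β) t := by
        apply ContinuousAt.div (by fun_prop) (by fun_prop)
        obtain ⟨h0, h1, h2⟩ := xfacts β t hβ0 hβ1 ht.le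
        intro h; rw [sub_eq_zero] at h; linarith
      have hev : ∀ᶠ s in 𝓝 t, b < rfun β s := hcontr.eventually_const_lt hb
      have hev2 : ∀ᶠ s in 𝓝[<] t, (b < rfun β s ∧ s ∈ Set.Ioo 0 t) := by
        filter_upwards [nhdsWithin_le_nhds hev, self_mem_nhdsWithin,
          nhdsWithin_le_nhds (Ioi_mem_nhds ht)] with s h1 h2 h3
        exact ⟨h1, h3, h2⟩
      obtain ⟨s, hbs, hsIoo⟩ := hev2.exists
      obtain ⟨C, hCpos, hlbs⟩ := hlb s hsIoo
      have h3 := (aux_tendsto C (rfun β s) hCpos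
        (rfun_pos β s hβ0 hβ1 hsIoo.1)).eventually (eventually_gt_nhds hbs)
      filter_upwards [h3, eventually_ge_atTop 1] with k h3k hk1
      calc b < (C * rfun β s ^ k) ^ ((1 : ℝ) / (k : ℝ)) := h3k
        _ ≤ c k ^ ((1 : ℝ) / (k : ℝ)) :=
            Real.rpow_le_rpow
              (mul_nonneg hCpos.le (pow_nonneg (rfun_pos β s hβ0 hβ1 hsIoo.1).le k))
              (hlbs k hk1) (by positivity)
    · intro b hb
      have h3 := (aux_tendsto C1 A hC1pos hApos).eventually (eventually_lt_nhds hb)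
      filter_upwards [h3, eventually_ge_atTop 1] with k h3k hk1
      calc c k ^ ((1 : ℝ) / (k : ℝ)) ≤ (C1 * A ^ k) ^ ((1 : ℝ) / (k : ℝ)) :=
            Real.rpow_le_rpow (hcnn k hk1) (hub k hk1) (by positivity)
        _ < b := h3k
  rw [hAr]
  exact htend.limsup_eq
end

section
/- Let n satisfy Assumption 1 with δ* > 0, and let η be a real number with 0 ≤ η < δ*. Then ∫_0^t n_τ e^{−ητ} dτ ∼ n_t e^{−ηt}/(δ*−η) as t → ∞; that is, lim_{t→∞} (δ*−η)·e^{ηt}·(∫_0^t n_τ e^{−ητ} dτ)/n_t = 1. In particular, taking η = 0, lim_{t→∞} n_t/a_t = δ* where a_t = ∫_0^t n_τ dτ. -/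
/-!
Since `log n_t / t → δ`, the limits `L x = lim n_{t-x} / n_t` must be `e^{-δ x}`: they are
multiplicative and monotone in `x`, and Cesàro averaging of `log n_{k+1} - log n_k` identifies
`L 1`. Substituting `s = t - τ`,
`e^{ηt} ∫_0^t n_τ e^{-ητ} dτ / n_t = ∫_0^t (n_{t-s} / n_t) e^{ηs} ds`, whose integrand converges
to `e^{-(δ-η)s}`. Iterating `n_{t-1} ≤ e^{-γ} n_t` for some `γ ∈ (max η 0, δ)` dominates it by a
multiple of `e^{-(γ-η)s}`, so dominated convergence gives the limit `1 / (δ - η)`.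
-/

open Filter Real intervalIntegral

/-- Assumption 1 on the wild-type growth function `n`. -/
def Assumption1 (n : ℝ → ℝ) : Prop :=
  (∀ τ : ℝ, τ < 0 → n τ = 0) ∧
  ContinuousOn n (Set.Ioi 0) ∧
  Filter.Tendsto n (nhdsWithin 0 (Set.Ioi 0)) (nhds (n 0)) ∧
  (∀ τ : ℝ, 0 < τ → 0 < n τ) ∧
  MonotoneOn n (Set.Ioi 0) ∧
  (∀ x : ℝ, 0 ≤ x → ∃ L : ℝ, 0 < L ∧
    Filter.Tendsto (fun t : ℝ => n (t - x) / n t) Filter.atTop (nhds L))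

open Set Topology MeasureTheory

theorem Filter.Tendsto.div_natCast_of_sub {u : ℕ → ℝ} {l : ℝ}
    (h : Tendsto (fun k => u (k + 1) - u k) atTop (𝓝 l)) :
    Tendsto (fun k : ℕ => u k / k) atTop (𝓝 l) := by
  have hmean : Tendsto (fun k : ℕ => (k : ℝ)⁻¹ * (u k - u 0)) atTop (𝓝 l) := by
    simpa only [Finset.sum_range_sub] using h.cesaro
  have hvanish : Tendsto (fun k : ℕ => (k : ℝ)⁻¹ * u 0) atTop (𝓝 0) := by
    simpa using (tendsto_inv_atTop_nhds_zero_nat (𝕜 := ℝ)).mul_const (u 0)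
  simpa [div_eq_inv_mul, ← mul_add] using hmean.add hvanish

theorem map_natCast_mul_of_add {f : ℝ → ℝ}
    (hadd : ∀ x y, 0 ≤ x → 0 ≤ y → f (x + y) = f x + f y) {x : ℝ} (hx : 0 ≤ x) (k : ℕ) :
    f (k * x) = k * f x := by
  induction k with
  | zero => simpa using hadd 0 0 le_rfl le_rfl
  | succ k ih =>
    rw [Nat.cast_succ, add_one_mul, hadd _ _ (by positivity) hx, ih, add_one_mul]

theorem eq_mul_of_add_of_monotoneOn {f : ℝ → ℝ}
    (hadd : ∀ x y, 0 ≤ x → 0 ≤ y → f (x + y) = f x + f y) (hf : MonotoneOn f (Ici 0))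
    {x : ℝ} (hx : 0 ≤ x) : f x = x * f 1 := by
  have hf1 : 0 ≤ f 1 := by
    have h0 : f 0 = 0 := by simpa using hadd 0 0 le_rfl le_rfl
    simpa [h0] using hf (mem_Ici.2 le_rfl) (mem_Ici.2 zero_le_one) zero_le_one
  have hnat (k : ℕ) : f k = k * f 1 := by simpa using map_natCast_mul_of_add hadd zero_le_one k
  -- Squeeze `q x` between consecutive integers: `|q f x - q x f 1| ≤ f 1` for every `q`.
  have hclose (q : ℕ) (hq : 0 < q) : |f x - x * f 1| ≤ f 1 / q := by
    have hq' : (0 : ℝ) < q := by exact_mod_cast hq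
    have hqx := map_natCast_mul_of_add hadd hx q
    have hfloor := Nat.floor_le (show 0 ≤ (q : ℝ) * x by positivity)
    have hlt_floor := Nat.lt_floor_add_one ((q : ℝ) * x)
    have hlo : f ⌊(q * x)⌋₊ ≤ f (q * x) := hf (by simp) (by simp; positivity) hfloor
    have hhi : f (q * x) ≤ f (⌊(q * x)⌋₊ + 1 : ℕ) :=
      hf (by simp; positivity) (by simp; positivity) (by push_cast; exact hlt_floor.le)
    rw [hnat] at hlo hhi
    push_cast at hhi
    have hscaled : |(q : ℝ) * (f x - x * f 1)| ≤ f 1 := by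
      rw [abs_le]; constructor <;> nlinarith
    rw [abs_mul, abs_of_pos hq'] at hscaled
    rwa [le_div_iff₀ hq', mul_comm]
  have hlim : Tendsto (fun q : ℕ => f 1 / q) atTop (𝓝 0) :=
    tendsto_const_div_atTop_nhds_zero_nat (f 1)
  have habs : |f x - x * f 1| ≤ 0 :=
    ge_of_tendsto hlim ((eventually_gt_atTop 0).mono hclose)
  linarith [abs_nonpos_iff.1 habs]

namespace Assumption1

variable {n : ℝ → ℝ}

theorem monotone (hn : Assumption1 n) : Monotone n := by
  obtain ⟨hneg, -, hright, hpos, hmono, -⟩ := hn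
  have hzero_le {b : ℝ} (hb : 0 < b) : n 0 ≤ n b := by
    refine le_of_tendsto hright ?_
    filter_upwards [Ioo_mem_nhdsGT hb] with τ hτ
    exact hmono hτ.1 hb hτ.2.le
  have hzero_nonneg : 0 ≤ n 0 :=
    ge_of_tendsto hright (eventually_mem_nhdsWithin.mono fun τ hτ => (hpos τ hτ).le)
  intro a b hab
  rcases lt_trichotomy a 0 with ha | rfl | ha
  · rw [hneg a ha]
    rcases lt_trichotomy b 0 with hb | rfl | hb
    · rw [hneg b hb]
    · exact hzero_nonneg
    · exact (hpos b hb).le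
  · rcases hab.eq_or_lt with rfl | hb
    · rfl
    · exact hzero_le hb
  · exact hmono ha (ha.trans_le hab) hab

theorem nonneg (hn : Assumption1 n) (τ : ℝ) : 0 ≤ n τ :=
  calc 0 = n (min τ 0 - 1) := (hn.1 _ (by linarith [min_le_right τ 0])).symm
    _ ≤ n τ := hn.monotone (by linarith [min_le_left τ 0])

end Assumption1

section RatioLimit

variable {n : ℝ → ℝ} {L : ℝ → ℝ}

theorem ratio_limit_mul (hpos : ∀ τ, 0 < τ → 0 < n τ)
    (hL : ∀ x, 0 ≤ x → Tendsto (fun t => n (t - x) / n t) atTop (𝓝 (L x)))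
    {x y : ℝ} (hx : 0 ≤ x) (hy : 0 ≤ y) : L (x + y) = L x * L y := by
  have hshift : Tendsto (fun t => n (t - y - x) / n (t - y)) atTop (𝓝 (L x)) :=
    (hL x hx).comp (tendsto_atTop_add_const_right atTop (-y) tendsto_id)
  refine tendsto_nhds_unique (hL (x + y) (by positivity)) ((hshift.mul (hL y hy)).congr' ?_)
  filter_upwards [eventually_gt_atTop y] with t ht
  rw [div_mul_div_cancel₀ (hpos _ (sub_pos.2 ht)).ne', sub_sub, add_comm]

theorem ratio_limit_antitoneOn (hmono : Monotone n) (hpos : ∀ τ, 0 < τ → 0 < n τ)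
    (hL : ∀ x, 0 ≤ x → Tendsto (fun t => n (t - x) / n t) atTop (𝓝 (L x))) :
    AntitoneOn L (Ici 0) := by
  intro x hx y hy hxy
  refine le_of_tendsto_of_tendsto (hL y hy) (hL x hx) ?_
  filter_upwards [eventually_gt_atTop 0] with t ht
  exact div_le_div_of_nonneg_right (hmono (by linarith)) (hpos t ht).le

theorem neg_log_ratio_limit_eq (hpos : ∀ τ, 0 < τ → 0 < n τ) {l δ : ℝ} (hl : 0 < l)
    (hl1 : Tendsto (fun t => n (t - 1) / n t) atTop (𝓝 l))
    (hδ : Tendsto (fun t => log (n t) / t) atTop (𝓝 δ)) : -log l = δ := by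
  have hdiff : Tendsto (fun k : ℕ => log (n (k + 1 : ℕ)) - log (n k)) atTop (𝓝 (-log l)) := by
    have hnat := hl1.comp <|
      tendsto_natCast_atTop_atTop.atTop_add (tendsto_const_nhds (x := (1 : ℝ)))
    refine ((continuousAt_log hl.ne').tendsto.comp hnat).neg.congr' ?_
    filter_upwards [eventually_ge_atTop 1] with k hk
    have hk' : (0 : ℝ) < k := by exact_mod_cast hk
    simp only [Function.comp_apply, add_sub_cancel_right, Nat.cast_add, Nat.cast_one]
    rw [log_div (hpos _ hk').ne' (hpos _ (by linarith)).ne', neg_sub]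
  exact tendsto_nhds_unique hdiff.div_natCast_of_sub (hδ.comp tendsto_natCast_atTop_atTop)

theorem tendsto_ratio_exp (hpos : ∀ τ, 0 < τ → 0 < n τ) (hmono : Monotone n)
    (hlim : ∀ x, 0 ≤ x → ∃ L, 0 < L ∧ Tendsto (fun t => n (t - x) / n t) atTop (𝓝 L))
    {δ : ℝ} (hδ : Tendsto (fun t => log (n t) / t) atTop (𝓝 δ)) {x : ℝ} (hx : 0 ≤ x) :
    Tendsto (fun t => n (t - x) / n t) atTop (𝓝 (exp (-δ * x))) := by
  choose L hL using fun x => (em (0 ≤ x)).elim (fun hx => (hlim x hx).imp fun _ h _ => h)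
    fun hx => ⟨1, fun h => absurd h hx⟩
  have hLpos x hx := (hL x hx).1
  have hL x hx := (hL x hx).2
  -- `-log L` is additive and monotone, hence linear.
  have hlin := eq_mul_of_add_of_monotoneOn (f := fun x => -log (L x))
    (fun x y hx hy => by
      simp only [ratio_limit_mul hpos hL hx hy, log_mul (hLpos x hx).ne' (hLpos y hy).ne']
      ring)
    (fun x hx y hy hxy => neg_le_neg <|
      log_le_log (hLpos y hy) (ratio_limit_antitoneOn hmono hpos hL hx hy hxy)) hx
  rw [neg_log_ratio_limit_eq hpos (hLpos 1 zero_le_one) (by simpa using hL 1 zero_le_one) hδ]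
    at hlin
  rw [show -δ * x = log (L x) by linarith, exp_log (hLpos x hx)]
  exact hL x hx

end RatioLimit

section ExponentialBound

variable {n : ℝ → ℝ} {γ T : ℝ}

theorem le_exp_mul_of_step_nat (hstep : ∀ t, T ≤ t → n (t - 1) ≤ exp (-γ) * n t) (k : ℕ)
    {t : ℝ} (ht : T + k ≤ t) : n (t - k) ≤ exp (-γ * k) * n t := by
  induction k with
  | zero => simp
  | succ k ih =>
    push_cast at ht ⊢
    calc n (t - (k + 1)) = n (t - k - 1) := by rw [sub_sub]
      _ ≤ exp (-γ) * n (t - k) := hstep _ (by linarith)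
      _ ≤ exp (-γ) * (exp (-γ * k) * n t) := by gcongr; exact ih (by linarith)
      _ = exp (-γ * (k + 1)) * n t := by rw [← mul_assoc, ← exp_add]; ring_nf

theorem le_exp_mul_of_step (hmono : Monotone n) (hnonneg : ∀ τ, 0 ≤ n τ) (hγ : 0 ≤ γ)
    (hT : 0 ≤ T) (hstep : ∀ t, T ≤ t → n (t - 1) ≤ exp (-γ) * n t) {t s : ℝ} (ht : T ≤ t)
    (hs : 0 ≤ s) (hst : s ≤ t) : n (t - s) ≤ exp (γ * (T + 1)) * exp (-γ * s) * n t := by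
  -- Step down `⌊min s (t - T)⌋` times from `t`, staying in the region `[T, ∞)` where the step
  -- bound holds; the remaining distance to `t - s` is at most `T + 1`.
  set k := ⌊min s (t - T)⌋₊
  have hk := Nat.floor_le (le_min hs (sub_nonneg.2 ht))
  have hk' := Nat.lt_floor_add_one (min s (t - T))
  have hmin : s - T ≤ min s (t - T) := le_min (by linarith) (by linarith)
  calc n (t - s) ≤ n (t - k) := hmono (by linarith [min_le_left s (t - T)])
    _ ≤ exp (-γ * k) * n t :=
      le_exp_mul_of_step_nat hstep k (by linarith [min_le_right s (t - T)])
    _ ≤ exp (γ * (T + 1)) * exp (-γ * s) * n t := by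
      rw [← exp_add]
      exact mul_le_mul_of_nonneg_right (exp_le_exp.2 (by nlinarith)) (hnonneg t)

theorem exists_le_exp_mul_of_tendsto_ratio {δ : ℝ} (hmono : Monotone n)
    (hnonneg : ∀ τ, 0 ≤ n τ) (hpos : ∀ τ, 0 < τ → 0 < n τ)
    (hrat : Tendsto (fun t => n (t - 1) / n t) atTop (𝓝 (exp (-δ)))) (hγ : 0 ≤ γ)
    (hγδ : γ < δ) :
    ∃ C > 0, ∃ T : ℝ,
      ∀ t, T ≤ t → ∀ s, 0 ≤ s → s ≤ t → n (t - s) ≤ C * exp (-γ * s) * n t := by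
  obtain ⟨T₀, hT₀⟩ := eventually_atTop.1 <|
    hrat.eventually_lt_const (exp_lt_exp.2 (neg_lt_neg hγδ))
  have hT : 1 ≤ max T₀ 1 := le_max_right T₀ 1
  refine ⟨_, exp_pos _, max T₀ 1,
    fun t ht s => le_exp_mul_of_step hmono hnonneg hγ (by linarith) ?_ ht⟩
  intro t ht
  have hstep := hT₀ t (le_of_max_le_left ht)
  rw [div_lt_iff₀ (hpos t (by linarith))] at hstep
  exact hstep.le

end ExponentialBound

theorem integral_comp_sub_mul_exp (n : ℝ → ℝ) (η t : ℝ) :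
    ∫ s in (0 : ℝ)..t, n (t - s) * exp (η * s) =
      exp (η * t) * ∫ τ in (0 : ℝ)..t, n τ * exp (-η * τ) := by
  calc ∫ s in (0 : ℝ)..t, n (t - s) * exp (η * s)
      = ∫ s in (0 : ℝ)..t, (fun τ => n τ * exp (η * (t - τ))) (t - s) := by
        simp only [sub_sub_cancel]
    _ = ∫ τ in (0 : ℝ)..t, n τ * exp (η * (t - τ)) := by
      rw [intervalIntegral.integral_comp_sub_left (fun τ => n τ * exp (η * (t - τ)))]; simp
    _ = exp (η * t) * ∫ τ in (0 : ℝ)..t, n τ * exp (-η * τ) := by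
      rw [← intervalIntegral.integral_const_mul]
      congr 1 with τ
      rw [mul_sub, sub_eq_add_neg, exp_add]
      ring_nf

theorem integral_Ioi_indicator_Iic {f : ℝ → ℝ} {t : ℝ} (ht : 0 ≤ t) :
    ∫ s in Ioi 0, (Iic t).indicator f s = ∫ s in (0 : ℝ)..t, f s := by
  rw [MeasureTheory.integral_indicator measurableSet_Iic,
    Measure.restrict_restrict measurableSet_Iic, inter_comm, Ioi_inter_Iic,
    intervalIntegral.integral_of_le ht]

theorem tendsto_integral_ratio_mul_exp {n : ℝ → ℝ} {δ η : ℝ} (hmono : Monotone n)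
    (hnonneg : ∀ τ, 0 ≤ n τ) (hpos : ∀ τ, 0 < τ → 0 < n τ)
    (hrat : ∀ x, 0 ≤ x → Tendsto (fun t => n (t - x) / n t) atTop (𝓝 (exp (-δ * x))))
    (hδ : 0 < δ) (hηδ : η < δ) :
    Tendsto (fun t => ∫ s in (0 : ℝ)..t, n (t - s) * exp (η * s) / n t) atTop
      (𝓝 (1 / (δ - η))) := by
  obtain ⟨γ, hγ, hγδ⟩ := exists_between (max_lt hηδ hδ)
  obtain ⟨C, hC_pos, T, hC⟩ := exists_le_exp_mul_of_tendsto_ratio hmono hnonneg hpos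
    (by simpa using hrat 1 zero_le_one) ((le_max_right η 0).trans hγ.le) hγδ
  set F : ℝ → ℝ → ℝ := fun t => (Iic t).indicator fun s => n (t - s) * exp (η * s) / n t
  have hF_meas (t : ℝ) : AEStronglyMeasurable (F t) (volume.restrict (Ioi 0)) := by
    refine (Measurable.indicator ?_ measurableSet_Iic).aestronglyMeasurable
    exact ((hmono.measurable.comp (measurable_const.sub measurable_id)).mul
      (measurable_exp.comp (measurable_id.const_mul η))).div_const _
  have h_bound : ∀ᶠ t in atTop, ∀ᵐ s ∂volume.restrict (Ioi 0),
      ‖F t s‖ ≤ C * exp ((η - γ) * s) := by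
    filter_upwards [eventually_ge_atTop T] with t ht
    refine (ae_restrict_iff' measurableSet_Ioi).2 (ae_of_all _ fun s (hs : 0 < s) => ?_)
    by_cases hst : s ≤ t
    · simp only [F, indicator_of_mem (mem_Iic.2 hst), norm_div, norm_mul,
        norm_of_nonneg (hnonneg _), norm_of_nonneg (exp_pos _).le]
      refine div_le_of_le_mul₀ (hnonneg t) (by positivity) ?_
      calc n (t - s) * exp (η * s)
          ≤ C * exp (-γ * s) * n t * exp (η * s) := by gcongr; exact hC t ht s hs.le hst
        _ = C * exp ((η - γ) * s) * n t := by
          rw [sub_mul, sub_eq_add_neg, exp_add]; ring_nf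
    · simp only [F, indicator_of_notMem (fun h => hst (mem_Iic.1 h)), norm_zero]
      positivity
  have h_int : Integrable (fun s => C * exp ((η - γ) * s)) (volume.restrict (Ioi 0)) :=
    (integrableOn_exp_mul_Ioi (by linarith [le_max_left η 0]) 0).const_mul _
  have h_lim : ∀ᵐ s ∂volume.restrict (Ioi 0),
      Tendsto (fun t => F t s) atTop (𝓝 (exp ((η - δ) * s))) := by
    refine (ae_restrict_iff' measurableSet_Ioi).2 (ae_of_all _ fun s (hs : 0 < s) => ?_)
    have hlim := (hrat s hs.le).mul_const (exp (η * s))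
    rw [← exp_add, show -δ * s + η * s = (η - δ) * s by ring] at hlim
    refine hlim.congr' ?_
    filter_upwards [eventually_ge_atTop s] with t hst
    simp only [F, indicator_of_mem (mem_Iic.2 hst), div_mul_eq_mul_div]
  have hDCT := tendsto_integral_filter_of_dominated_convergence _
    (Eventually.of_forall hF_meas) h_bound h_int h_lim
  rw [integral_exp_mul_Ioi (by linarith) 0, mul_zero, exp_zero, neg_div, ← div_neg,
    neg_sub] at hDCT
  refine hDCT.congr' ?_
  filter_upwards [eventually_ge_atTop 0] with t ht
  exact integral_Ioi_indicator_Iic ht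

theorem integral_asymptotics_exponential_type_general
    (n : ℝ → ℝ) (hn : Assumption1 n) (δ : ℝ)
    (hδlim : Filter.Tendsto (fun t : ℝ => Real.log (n t) / t) Filter.atTop (nhds δ))
    (hδpos : 0 < δ) (η : ℝ) (hηδ : η < δ) :
    Filter.Tendsto
      (fun t : ℝ =>
        (δ - η) * Real.exp (η * t) * (∫ τ in (0:ℝ)..t, n τ * Real.exp (-η * τ)) / n t)
      Filter.atTop (nhds 1) ∧
    Filter.Tendsto (fun t : ℝ => n t / ∫ τ in (0:ℝ)..t, n τ) Filter.atTop (nhds δ) := by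
  have hmono := hn.monotone
  have hnonneg := hn.nonneg
  obtain ⟨-, -, -, hpos, -, hlim⟩ := hn
  have hrat x (hx : 0 ≤ x) := tendsto_ratio_exp hpos hmono hlim hδlim hx
  have hasymp {η : ℝ} (hηδ : η < δ) : Tendsto
      (fun t => exp (η * t) * (∫ τ in (0 : ℝ)..t, n τ * exp (-η * τ)) / n t) atTop
      (𝓝 (1 / (δ - η))) := by
    simpa only [intervalIntegral.integral_div, integral_comp_sub_mul_exp] using
      tendsto_integral_ratio_mul_exp hmono hnonneg hpos hrat hδpos hηδ
  constructor
  · have h := (hasymp hηδ).const_mul (δ - η)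
    rw [mul_one_div_cancel (sub_ne_zero.2 hηδ.ne')] at h
    simpa only [mul_div_assoc, mul_assoc] using h
  · have h := (hasymp hδpos).inv₀ (by positivity)
    simpa using h

/-- For exponential-type growth (`δ* > 0`) and `0 ≤ η < δ*`,
`∫_0^t n_τ e^{−ητ} dτ ∼ n_t e^{−ηt}/(δ*−η)` as `t → ∞`; in particular (η = 0)
`n_t/a_t → δ*`. -/
theorem integral_asymptotics_exponential_type
    (n : ℝ → ℝ) (hn : Assumption1 n) (δ : ℝ)
    (hδlim : Filter.Tendsto (fun t : ℝ => Real.log (n t) / t) Filter.atTop (nhds δ))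
    (hδpos : 0 < δ) (η : ℝ) (hη0 : 0 ≤ η) (hηδ : η < δ) :
    Filter.Tendsto
      (fun t : ℝ =>
        (δ - η) * Real.exp (η * t) * (∫ τ in (0:ℝ)..t, n τ * Real.exp (-η * τ)) / n t)
      Filter.atTop (nhds 1) ∧
    Filter.Tendsto (fun t : ℝ => n t / ∫ τ in (0:ℝ)..t, n τ) Filter.atTop (nhds δ) :=
  integral_asymptotics_exponential_type_general n hn δ hδlim hδpos η hηδ
end

section
/- Let β ∈ [0,1), λ = 1−β, let n satisfy Assumption 1, and set γ* = δ*/λ. Let s be real with |s| < 1 such that ξ = (β−s)/(1−s) satisfies |ξ| < 1. Then lim_{t→∞} (1/n_t)·∫_0^t n_τ·(Z_{t−τ}(s) − β) dτ = −Σ_{k=1}^∞ ξ^k/(γ*+k), where Z_u(s) = 1 − λ/(1 − ξ e^{−λu}). Equivalently, lim_{t→∞} (a_t/n_t)(𝒴_t(s) − β) = −Σ_{k=1}^∞ ξ^k/(γ*+k). -/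
/-!
Substituting `x = t - τ` turns the quantity into `∫₀^∞ (n_{t-x}/n_t) (Z_x(s) - β) dx`. Under
Assumption 1 the ratio `n_{t-x}/n_t` has a positive limit `L_x`, and `-log L_x` is the limit of the
increments `log n_t - log n_{t-x}`; their Cesàro means along `t = x, 2x, …` give `-log L_x = δ* x`.
As `n` is monotone the ratio is at most `1`, and `|Z_x(s) - β| ≤ C e^{-λx}`, so dominated
convergence applies. Finally `Z_x(s) - β = -λ q/(1 - q)` with `q = ξ e^{-λx}`; expanding
`q/(1 - q) = ∑_{k≥1} q^k` and integrating term by term against `e^{-δ* x}` gives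
`-∑_{k≥1} λ ξ^k/(δ* + kλ) = -∑_{k≥1} ξ^k/(γ* + k)`.
-/

open Filter Real intervalIntegral

open MeasureTheory Set Topology

theorem monotone_of_monotoneOn_Ioi {n : ℝ → ℝ} (hzero : ∀ τ : ℝ, τ < 0 → n τ = 0)
    (hrc : Tendsto n (𝓝[>] 0) (𝓝 (n 0))) (hnonneg : ∀ τ : ℝ, 0 < τ → 0 ≤ n τ)
    (hmono : MonotoneOn n (Ioi 0)) : Monotone n := by
  have h0 : 0 ≤ n 0 := ge_of_tendsto hrc <| by
    filter_upwards [self_mem_nhdsWithin] with τ hτ using hnonneg τ hτ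
  have h0_le : ∀ b, 0 < b → n 0 ≤ n b := fun b hb => le_of_tendsto hrc <| by
    filter_upwards [Ioo_mem_nhdsGT hb] with τ hτ using hmono hτ.1 hb hτ.2.le
  intro a b hab
  rcases lt_or_ge 0 a with ha | ha
  · exact hmono ha (ha.trans_le hab) hab
  have hna : n a ≤ n 0 := by
    rcases ha.lt_or_eq with ha | rfl
    · rw [hzero a ha]; exact h0
    · rfl
  rcases lt_or_ge 0 b with hb | hb
  · exact hna.trans (h0_le b hb)
  rcases hb.lt_or_eq with hb | rfl
  · rw [hzero b hb, hzero a (hab.trans_lt hb)]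
  · exact hna

theorem nonneg_of_tendsto_log_div {n : ℝ → ℝ} {δ : ℝ} (hmono : Monotone n) (hpos : 0 < n 1)
    (hδ : Tendsto (fun t => log (n t) / t) atTop (𝓝 δ)) : 0 ≤ δ := by
  refine le_of_tendsto_of_tendsto
    ((tendsto_const_nhds (x := log (n 1))).div_atTop tendsto_id) hδ ?_
  filter_upwards [eventually_ge_atTop 1] with t ht
  exact div_le_div_of_nonneg_right (log_le_log hpos (hmono ht)) (zero_le_one.trans ht)

/-- Cesàro averaging of the increments along the progression `x ℕ`. -/
theorem eq_mul_of_tendsto_sub_comp_sub {u : ℝ → ℝ} {c δ x : ℝ} (hx : 0 < x)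
    (hdiff : Tendsto (fun t => u t - u (t - x)) atTop (𝓝 c))
    (hu : Tendsto (fun t => u t / t) atTop (𝓝 δ)) : c = δ * x := by
  set v : ℕ → ℝ := fun j => u (x * j)
  have hxj : Tendsto (fun j : ℕ => x * j) atTop atTop :=
    tendsto_natCast_atTop_atTop.const_mul_atTop hx
  have hstep : Tendsto (fun j => v (j + 1) - v j) atTop (𝓝 c) := by
    refine (hdiff.comp (hxj.comp (tendsto_add_atTop_nat 1))).congr fun j => ?_
    simp only [Function.comp_apply, v, Nat.cast_add, Nat.cast_one, mul_add, mul_one,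
      add_sub_cancel_right]
  have hces : Tendsto (fun m : ℕ => (m : ℝ)⁻¹ * (v m - v 0)) atTop (𝓝 c) := by
    simpa only [Finset.sum_range_sub] using hstep.cesaro
  have hgrowth : Tendsto (fun m : ℕ => (m : ℝ)⁻¹ * (v m - v 0)) atTop (𝓝 (δ * x)) := by
    have hlin := ((hu.comp hxj).mul_const x).sub
      (tendsto_inv_atTop_zero.comp tendsto_natCast_atTop_atTop |>.mul_const (v 0))
    rw [zero_mul, sub_zero] at hlin
    refine hlin.congr' ?_
    filter_upwards [eventually_ne_atTop 0] with m hm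
    have : (m : ℝ) ≠ 0 := Nat.cast_ne_zero.mpr hm
    simp only [Function.comp_apply, v]
    field_simp
  exact tendsto_nhds_unique hces hgrowth

theorem eq_exp_neg_mul_of_tendsto_div {n : ℝ → ℝ} {δ L x : ℝ} (hx : 0 < x)
    (hpos : ∀ τ : ℝ, 0 < τ → 0 < n τ) (hL : 0 < L)
    (hlim : Tendsto (fun t => n (t - x) / n t) atTop (𝓝 L))
    (hδ : Tendsto (fun t => log (n t) / t) atTop (𝓝 δ)) : L = exp (-δ * x) := by
  have hdiff : Tendsto (fun t => log (n t) - log (n (t - x))) atTop (𝓝 (-log L)) := by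
    refine ((continuousAt_log hL.ne').tendsto.comp hlim).neg.congr' ?_
    filter_upwards [eventually_gt_atTop x] with t ht
    rw [Function.comp_apply, log_div (hpos _ (by linarith)).ne' (hpos _ (by linarith)).ne']
    ring
  rw [← exp_log hL, neg_mul, ← eq_mul_of_tendsto_sub_comp_sub hx hdiff hδ, neg_neg]

theorem integral_mul_comp_sub_eq_integral_Ioi {n f : ℝ → ℝ}
    (hzero : ∀ τ : ℝ, τ < 0 → n τ = 0) {t : ℝ} (ht : 0 ≤ t) :
    ∫ τ in (0 : ℝ)..t, n τ * f (t - τ) = ∫ x in Ioi 0, n (t - x) * f x := by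
  have hsub := integral_comp_sub_left (fun x => n (t - x) * f x) t (a := 0) (b := t)
  simp only [sub_sub_cancel, sub_self, sub_zero] at hsub
  rw [hsub, integral_of_le ht,
    setIntegral_eq_of_subset_of_forall_sdiff_eq_zero measurableSet_Ioi Ioc_subset_Ioi_self]
  rintro x ⟨hx, hxt⟩
  have htx : t < x := lt_of_not_ge fun hxt' => hxt ⟨hx, hxt'⟩
  rw [hzero _ (sub_neg.mpr htx), zero_mul]

theorem tendsto_integral_mul_comp_sub_div {n f r : ℝ → ℝ} (hmono : Monotone n)
    (hzero : ∀ τ : ℝ, τ < 0 → n τ = 0) (hpos : ∀ τ : ℝ, 0 < τ → 0 < n τ)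
    (hf : IntegrableOn f (Ioi 0))
    (hr : ∀ x : ℝ, 0 < x → Tendsto (fun t => n (t - x) / n t) atTop (𝓝 (r x))) :
    Tendsto (fun t => (1 / n t) * ∫ τ in (0 : ℝ)..t, n τ * f (t - τ)) atTop
      (𝓝 (∫ x in Ioi 0, r x * f x)) := by
  have hnonneg : ∀ y, 0 ≤ n y := fun y =>
    (hzero (-|y| - 1) (by linarith [abs_nonneg y])).symm.le.trans
      (hmono (by linarith [neg_abs_le y]))
  have hconv : ∀ t : ℝ, 0 ≤ t →
      (1 / n t) * ∫ τ in (0 : ℝ)..t, n τ * f (t - τ) =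
        ∫ x in Ioi 0, n (t - x) / n t * f x := by
    intro t ht
    rw [integral_mul_comp_sub_eq_integral_Ioi hzero ht, ← MeasureTheory.integral_const_mul]
    congr 1 with x
    ring
  refine Tendsto.congr' ?_
    (tendsto_integral_filter_of_dominated_convergence (F := fun t x => n (t - x) / n t * f x)
      (fun x => ‖f x‖) ?_ ?_ hf.norm ?_)
  · filter_upwards [eventually_ge_atTop 0] with t ht using (hconv t ht).symm
  · exact .of_forall fun t =>
      ((hmono.measurable.comp (measurable_const.sub measurable_id)).div_const _
        ).aestronglyMeasurable.mul hf.aestronglyMeasurable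
  · filter_upwards [eventually_gt_atTop 0] with t ht
    filter_upwards [ae_restrict_mem measurableSet_Ioi] with x hx
    have hratio : n (t - x) / n t ≤ 1 :=
      (div_le_one (hpos t ht)).mpr (hmono (by linarith [mem_Ioi.mp hx]))
    rw [norm_mul, Real.norm_of_nonneg (div_nonneg (hnonneg _) (hnonneg _))]
    exact mul_le_of_le_one_left (norm_nonneg _) hratio
  · filter_upwards [ae_restrict_mem measurableSet_Ioi] with x hx using (hr x hx).mul_const _

section GeometricKernel

variable {c lam ξ x : ℝ}

theorem abs_mul_exp_neg_mul_le (hlam : 0 ≤ lam) (hx : 0 ≤ x) :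
    |ξ * exp (-lam * x)| ≤ |ξ| := by
  rw [abs_mul, abs_of_pos (exp_pos _)]
  exact mul_le_of_le_one_right (abs_nonneg ξ) (exp_le_one_iff.mpr (by nlinarith))

theorem abs_geometric_div_le (hlam : 0 ≤ lam) (hξ : |ξ| < 1) (hx : 0 ≤ x) :
    |ξ * exp (-lam * x) / (1 - ξ * exp (-lam * x))| ≤ |ξ| / (1 - |ξ|) * exp (-lam * x) := by
  have hq := abs_mul_exp_neg_mul_le (ξ := ξ) hlam hx
  have hden : 1 - |ξ| ≤ |1 - ξ * exp (-lam * x)| := by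
    linarith [abs_sub_abs_le_abs_sub 1 (ξ * exp (-lam * x)), abs_one (α := ℝ)]
  rw [abs_div, div_mul_eq_mul_div, abs_mul, abs_of_pos (exp_pos _)]
  exact div_le_div_of_nonneg_left (by positivity) (by linarith) hden

theorem integrableOn_geometric_div (hlam : 0 < lam) (hξ : |ξ| < 1) :
    IntegrableOn (fun x => ξ * exp (-lam * x) / (1 - ξ * exp (-lam * x))) (Ioi 0) := by
  refine Integrable.mono' ((exp_neg_integrableOn_Ioi 0 hlam).const_mul (|ξ| / (1 - |ξ|)))
    (by fun_prop : Measurable _).aestronglyMeasurable ?_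
  filter_upwards [ae_restrict_mem measurableSet_Ioi] with x hx
  exact abs_geometric_div_le hlam.le hξ (le_of_lt hx)

theorem integral_mul_exp_neg_mul_Ioi (a : ℝ) {b : ℝ} (hb : 0 < b) :
    ∫ x in Ioi 0, a * exp (-b * x) = a / b := by
  rw [MeasureTheory.integral_const_mul, integral_exp_mul_Ioi (neg_lt_zero.mpr hb), mul_zero,
    exp_zero, neg_div_neg_eq, mul_one_div]

/-- Expand `q / (1 - q) = ∑ q ^ (k + 1)` and integrate term by term. -/
theorem integral_exp_mul_geometric_div (hlam : 0 ≤ lam) (hc : 0 < c + lam) (hξ : |ξ| < 1) :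
    ∫ x in Ioi 0, exp (-c * x) * (ξ * exp (-lam * x) / (1 - ξ * exp (-lam * x))) =
      ∑' k : ℕ, ξ ^ (k + 1) / (c + (k + 1) * lam) := by
  set b : ℕ → ℝ := fun k => c + (k + 1) * lam
  have hb : ∀ k, c + lam ≤ b k := fun k => by
    have : 0 ≤ (k : ℝ) * lam := by positivity
    simp only [b]; nlinarith
  have hbpos : ∀ k, 0 < b k := fun k => hc.trans_le (hb k)
  set G : ℕ → ℝ → ℝ := fun k x => ξ ^ (k + 1) * exp (-b k * x)
  have hG_int : ∀ k, Integrable (G k) (volume.restrict (Ioi 0)) := fun k =>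
    (exp_neg_integrableOn_Ioi 0 (hbpos k)).const_mul _
  have hG_norm : ∀ k, ∫ x in Ioi 0, ‖G k x‖ = |ξ| ^ (k + 1) / b k := fun k => by
    simp only [G, norm_mul, norm_pow, Real.norm_eq_abs, abs_of_pos (exp_pos _)]
    exact integral_mul_exp_neg_mul_Ioi _ (hbpos k)
  have hG_summable : Summable fun k => ∫ x in Ioi 0, ‖G k x‖ := by
    refine .of_nonneg_of_le (fun k => ?_) (fun k => ?_)
      ((summable_geometric_of_lt_one (abs_nonneg ξ) hξ).mul_left (|ξ| / (c + lam)))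
    · rw [hG_norm]; exact div_nonneg (by positivity) (hbpos k).le
    · calc ∫ x in Ioi 0, ‖G k x‖ ≤ |ξ| ^ (k + 1) / (c + lam) := by
            rw [hG_norm]; exact div_le_div_of_nonneg_left (by positivity) hc (hb k)
        _ = |ξ| / (c + lam) * |ξ| ^ k := by ring
  have hG_sum : EqOn (fun x => ∑' k, G k x)
      (fun x => exp (-c * x) * (ξ * exp (-lam * x) / (1 - ξ * exp (-lam * x)))) (Ioi 0) := by
    intro x hx
    set q := ξ * exp (-lam * x)
    have hq : ‖q‖ < 1 := (abs_mul_exp_neg_mul_le hlam (le_of_lt hx)).trans_lt hξ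
    have hGq : ∀ k, G k x = exp (-c * x) * q * q ^ k := fun k => by
      have hexp : exp (-b k * x) = exp (-c * x) * exp (-lam * x) * exp (-lam * x) ^ k := by
        rw [← exp_nat_mul, ← exp_add, ← exp_add]; simp only [b]; ring_nf
      simp only [G, q, hexp]; ring
    simp only [hGq, tsum_mul_left, tsum_geometric_of_norm_lt_one hq]
    ring
  rw [← setIntegral_congr_fun measurableSet_Ioi hG_sum,
    ← integral_tsum_of_summable_integral_norm hG_int hG_summable]
  exact tsum_congr fun k => integral_mul_exp_neg_mul_Ioi _ (hbpos k)

theorem sub_div_one_sub_sub_eq_neg_mul {β : ℝ} (hlam : lam = 1 - β) (hlam0 : 0 ≤ lam)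
    (hξ : |ξ| < 1) (hx : 0 ≤ x) :
    (1 - lam / (1 - ξ * exp (-lam * x))) - β =
      -lam * (ξ * exp (-lam * x) / (1 - ξ * exp (-lam * x))) := by
  have hq : ξ * exp (-lam * x) < 1 :=
    (le_abs_self _).trans_lt ((abs_mul_exp_neg_mul_le hlam0 hx).trans_lt hξ)
  rw [show β = 1 - lam by linarith]
  generalize ξ * exp (-lam * x) = q at hq ⊢
  field_simp [(sub_pos.mpr hq).ne']
  ring

end GeometricKernel

theorem Assumption1.monotone_s10 {n : ℝ → ℝ} (hn : Assumption1 n) : Monotone n := by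
  obtain ⟨hzero, -, hrc, hpos, hmono, -⟩ := hn
  exact monotone_of_monotoneOn_Ioi hzero hrc (fun τ hτ => (hpos τ hτ).le) hmono

theorem Assumption1.tendsto_div_sub {n : ℝ → ℝ} {δ x : ℝ} (hn : Assumption1 n)
    (hδ : Tendsto (fun t => log (n t) / t) atTop (𝓝 δ)) (hx : 0 < x) :
    Tendsto (fun t => n (t - x) / n t) atTop (𝓝 (exp (-δ * x))) := by
  obtain ⟨-, -, -, hpos, -, hlim⟩ := hn
  obtain ⟨L, hL, hL_lim⟩ := hlim x hx.le
  rwa [← eq_exp_neg_mul_of_tendsto_div hx hpos hL hL_lim hδ]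

theorem limit_clone_generating_function_general
    (β : ℝ) (hβ : β ∈ Set.Ico (0 : ℝ) 1) (lam : ℝ) (hlam : lam = 1 - β)
    (n : ℝ → ℝ) (hn : Assumption1 n) (δ : ℝ)
    (hδlim : Filter.Tendsto (fun t : ℝ => Real.log (n t) / t) Filter.atTop (nhds δ))
    (ξ γ : ℝ) (hξ : |ξ| < 1)
    (hγ : γ = δ / lam) :
    Filter.Tendsto
      (fun t : ℝ =>
        (1 / n t) * ∫ τ in (0:ℝ)..t,
          n τ * ((1 - lam / (1 - ξ * Real.exp (-lam * (t - τ)))) - β))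
      Filter.atTop
      (nhds (-∑' k : ℕ, ξ ^ (k + 1) / (γ + (k + 1)))) := by
  have hmono := hn.monotone_s10
  have hratio := fun x (hx : 0 < x) => hn.tendsto_div_sub hδlim hx
  obtain ⟨hzero, -, -, hpos, -⟩ := hn
  have hlam0 : 0 < lam := by rw [hlam]; linarith [hβ.2]
  have hδ0 : 0 ≤ δ := nonneg_of_tendsto_log_div hmono (hpos 1 one_pos) hδlim
  have hZ : EqOn (fun u => (1 - lam / (1 - ξ * exp (-lam * u))) - β)
      (fun u => -lam * (ξ * exp (-lam * u) / (1 - ξ * exp (-lam * u)))) (Ioi 0) :=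
    fun u hu => sub_div_one_sub_sub_eq_neg_mul hlam hlam0.le hξ (le_of_lt hu)
  have hvalue : ∫ x in Ioi 0, exp (-δ * x) * ((1 - lam / (1 - ξ * exp (-lam * x))) - β) =
      -∑' k : ℕ, ξ ^ (k + 1) / (γ + (k + 1)) := by
    calc _ = -lam * ∫ x in Ioi 0, exp (-δ * x) *
              (ξ * exp (-lam * x) / (1 - ξ * exp (-lam * x))) := by
          rw [← MeasureTheory.integral_const_mul]
          refine setIntegral_congr_fun measurableSet_Ioi fun x hx => ?_
          rw [sub_div_one_sub_sub_eq_neg_mul hlam hlam0.le hξ (le_of_lt hx)]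
          ring
      _ = -∑' k : ℕ, lam * (ξ ^ (k + 1) / (δ + (k + 1) * lam)) := by
          rw [integral_exp_mul_geometric_div hlam0.le (by linarith) hξ, neg_mul, tsum_mul_left]
      _ = _ := by
          refine congrArg Neg.neg (tsum_congr fun k => ?_)
          rw [hγ]
          field_simp
  rw [← hvalue]
  exact tendsto_integral_mul_comp_sub_div hmono hzero hpos
    (IntegrableOn.congr_fun ((integrableOn_geometric_div hlam0 hξ).const_mul (-lam)) hZ.symm
      measurableSet_Ioi) hratio

/-- Universal large-time limit of the (shifted, rescaled) clone size generating function: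
`lim_{t→∞} (1/n_t) ∫_0^t n_τ (Z_{t−τ}(s) − β) dτ = −Σ_{k≥1} ξ^k/(γ*+k)`,
where `Z_u(s) = 1 − λ/(1 − ξ e^{−λu})`, `ξ = (β−s)/(1−s)`, `λ = 1−β`, `γ* = δ*/λ`. -/
theorem limit_clone_generating_function
    (β : ℝ) (hβ : β ∈ Set.Ico (0 : ℝ) 1) (lam : ℝ) (hlam : lam = 1 - β)
    (n : ℝ → ℝ) (hn : Assumption1 n) (δ : ℝ)
    (hδlim : Filter.Tendsto (fun t : ℝ => Real.log (n t) / t) Filter.atTop (nhds δ))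
    (s ξ γ : ℝ) (hs : |s| < 1) (hξdef : ξ = (β - s) / (1 - s)) (hξ : |ξ| < 1)
    (hγ : γ = δ / lam) :
    Filter.Tendsto
      (fun t : ℝ =>
        (1 / n t) * ∫ τ in (0:ℝ)..t,
          n τ * ((1 - lam / (1 - ξ * Real.exp (-lam * (t - τ)))) - β))
      Filter.atTop
      (nhds (-∑' k : ℕ, ξ ^ (k + 1) / (γ + (k + 1)))) :=
  limit_clone_generating_function_general β hβ lam hlam n hn δ hδlim ξ γ hξ hγ
end
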